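/- arXiv:0804.0330 — 3 statements merged into one kernel-verified Lean document; each statement's English description precedes it below -/
import Mathlib

section
/- In the two-component case with rates $f_1 > 0$, $f_2 = 0$, masses $\rho_1 \in (0,1)$, $\rho_2 = 1 - \rho_1$, and uniform initial data $u_i(y,0) = \rho_i$, the functions defined by $u_1(y,t) = 1$, $u_2(y,t) = 0$, $v(y,t) = f_1(\rho_1 - y)$ for $y < y_C(t) := \rho_1(1 - e^{-f_1 t})$, and $u_1(y,t) = \rho_1 e^{-f_1 t}/(\rho_1 e^{-f_1 t} + \rho_2)$, $u_2(y,t) = \rho_2/(\rho_1 e^{-f_1 t} + \rho_2)$, $v(y,t) = (1-y) f_1 \rho_1 e^{-f_1 t}/(\rho_1 e^{-f_1 t} + \rho_2)$ for $y > y_C(t)$, satisfy the equations $\partial_t u_i + \partial_y(v u_i) = -f_i u_i$ ($i=1,2$) and $u_1 + u_2 = 1$ on each of the two open regions $\{y < y_C(t)\}$ and $\{y > y_C(t)\}$. -/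
/-!
In each region the densities do not depend on `y` and the velocity is affine in `y` with slope
`-σ(t)`, so `∂_y(v u_i) = -σ u_i` and each continuity equation reduces to the ODE
`u_i' = (σ - f_i) u_i`. Below `y_C` this holds with `σ = f₁` and constant `u_i`; above it, with
`E = ρ₁ e^{-f₁ t}`, `D = E + ρ₂` and `σ = f₁ E / D`, it is the quotient rule, since `E' = -f₁ E`.
-/

open Real

theorem hasDerivAt_const_mul_exp_neg_mul (a f t : ℝ) :
    HasDerivAt (fun τ => a * exp (-f * τ)) (-f * (a * exp (-f * t))) t :=
  (((hasDerivAt_id' t).const_mul (-f)).exp.const_mul a).congr_deriv (by ring)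

theorem HasDerivAt.div_add_const_self {g : ℝ → ℝ} {g' c t : ℝ} (hg : HasDerivAt g g' t)
    (h : g t + c ≠ 0) : HasDerivAt (fun τ => g τ / (g τ + c)) (c * g' / (g t + c) ^ 2) t :=
  (hg.div (hg.add_const c) h).congr_deriv (by ring)

theorem HasDerivAt.const_div_add_const {g : ℝ → ℝ} {g' c t : ℝ} (hg : HasDerivAt g g' t)
    (h : g t + c ≠ 0) : HasDerivAt (fun τ => c / (g τ + c)) (-(c * g') / (g t + c) ^ 2) t :=
  ((hasDerivAt_const t c).div (hg.add_const c) h).congr_deriv (by ring)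

theorem stmt_9_general (f1 ρ1 : ℝ) (hρ1 : ρ1 ∈ Set.Ioo (0:ℝ) 1)
    (ρ2 : ℝ) (hρ2 : ρ2 = 1 - ρ1)
    (yC : ℝ → ℝ) :
    -- region y < y_C(t): u₁ = 1, u₂ = 0, v(y,t) = f₁(ρ₁ - y)
    (∀ t : ℝ, 0 < t → ∀ y ∈ Set.Ico (0:ℝ) 1, y < yC t →
      (deriv (fun _ : ℝ => (1:ℝ)) t + deriv (fun z => f1 * (ρ1 - z) * 1) y = -(f1 * 1)) ∧
      (deriv (fun _ : ℝ => (0:ℝ)) t + deriv (fun z => f1 * (ρ1 - z) * 0) y = -(0 * 0)) ∧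
      (1 + (0:ℝ) = 1)) ∧
    -- region y > y_C(t): u₁ = ρ₁e^{-f₁t}/D, u₂ = ρ₂/D, v = (1-y)f₁ρ₁e^{-f₁t}/D
    (∀ t : ℝ, 0 < t → ∀ y ∈ Set.Ico (0:ℝ) 1, yC t < y →
      (deriv (fun τ => ρ1 * Real.exp (-f1 * τ) / (ρ1 * Real.exp (-f1 * τ) + ρ2)) t +
        deriv (fun z => ((1 - z) * f1 * (ρ1 * Real.exp (-f1 * t)) / (ρ1 * Real.exp (-f1 * t) + ρ2)) *
          (ρ1 * Real.exp (-f1 * t) / (ρ1 * Real.exp (-f1 * t) + ρ2))) y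
        = -(f1 * (ρ1 * Real.exp (-f1 * t) / (ρ1 * Real.exp (-f1 * t) + ρ2)))) ∧
      (deriv (fun τ => ρ2 / (ρ1 * Real.exp (-f1 * τ) + ρ2)) t +
        deriv (fun z => ((1 - z) * f1 * (ρ1 * Real.exp (-f1 * t)) / (ρ1 * Real.exp (-f1 * t) + ρ2)) *
          (ρ2 / (ρ1 * Real.exp (-f1 * t) + ρ2))) y
        = -(0 * (ρ2 / (ρ1 * Real.exp (-f1 * t) + ρ2)))) ∧
      (ρ1 * Real.exp (-f1 * t) / (ρ1 * Real.exp (-f1 * t) + ρ2) +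
        ρ2 / (ρ1 * Real.exp (-f1 * t) + ρ2) = 1)) := by
  refine ⟨fun t _ y _ _ => ⟨by simp, by simp, by norm_num⟩, fun t _ y _ _ => ?_⟩
  have hD : ρ1 * Real.exp (-f1 * t) + ρ2 ≠ 0 := by
    have := mul_pos hρ1.1 (Real.exp_pos (-f1 * t))
    linarith [hρ1.2]
  have hE := hasDerivAt_const_mul_exp_neg_mul ρ1 f1 t
  have hu₁ := (hE.div_add_const_self hD).deriv
  have hu₂ := (hE.const_div_add_const hD).deriv
  beta_reduce at hu₁ hu₂
  set E := ρ1 * Real.exp (-f1 * t)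
  have hflux (u : ℝ) :
      deriv (fun z => (1 - z) * f1 * E / (E + ρ2) * u) y = -(f1 * E / (E + ρ2) * u) := by
    simp
    ring
  refine ⟨?_, ?_, by rw [← add_div, div_self hD]⟩
  · rw [hu₁, hflux]
    field_simp
    ring
  · rw [hu₂, hflux]
    field_simp
    ring

/-- Two-component example with `f₂ = 0` and uniform initial data: the explicit piecewise
formulas satisfy the continuity equations and `u₁ + u₂ = 1` on each of the two open
regions `{y < y_C(t)}` and `{y > y_C(t)}`, where `y_C(t) = ρ₁(1 - e^{-f₁ t})`. -/
theorem stmt_9 (f1 ρ1 : ℝ) (hf1 : 0 < f1) (hρ1 : ρ1 ∈ Set.Ioo (0:ℝ) 1)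
    (ρ2 : ℝ) (hρ2 : ρ2 = 1 - ρ1)
    (yC : ℝ → ℝ) (hyC : ∀ t, yC t = ρ1 * (1 - Real.exp (-f1 * t))) :
    -- region y < y_C(t): u₁ = 1, u₂ = 0, v(y,t) = f₁(ρ₁ - y)
    (∀ t : ℝ, 0 < t → ∀ y ∈ Set.Ico (0:ℝ) 1, y < yC t →
      (deriv (fun _ : ℝ => (1:ℝ)) t + deriv (fun z => f1 * (ρ1 - z) * 1) y = -(f1 * 1)) ∧
      (deriv (fun _ : ℝ => (0:ℝ)) t + deriv (fun z => f1 * (ρ1 - z) * 0) y = -(0 * 0)) ∧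
      (1 + (0:ℝ) = 1)) ∧
    -- region y > y_C(t): u₁ = ρ₁e^{-f₁t}/D, u₂ = ρ₂/D, v = (1-y)f₁ρ₁e^{-f₁t}/D
    (∀ t : ℝ, 0 < t → ∀ y ∈ Set.Ico (0:ℝ) 1, yC t < y →
      (deriv (fun τ => ρ1 * Real.exp (-f1 * τ) / (ρ1 * Real.exp (-f1 * τ) + ρ2)) t +
        deriv (fun z => ((1 - z) * f1 * (ρ1 * Real.exp (-f1 * t)) / (ρ1 * Real.exp (-f1 * t) + ρ2)) *
          (ρ1 * Real.exp (-f1 * t) / (ρ1 * Real.exp (-f1 * t) + ρ2))) y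
        = -(f1 * (ρ1 * Real.exp (-f1 * t) / (ρ1 * Real.exp (-f1 * t) + ρ2)))) ∧
      (deriv (fun τ => ρ2 / (ρ1 * Real.exp (-f1 * τ) + ρ2)) t +
        deriv (fun z => ((1 - z) * f1 * (ρ1 * Real.exp (-f1 * t)) / (ρ1 * Real.exp (-f1 * t) + ρ2)) *
          (ρ2 / (ρ1 * Real.exp (-f1 * t) + ρ2))) y
        = -(0 * (ρ2 / (ρ1 * Real.exp (-f1 * t) + ρ2)))) ∧
      (ρ1 * Real.exp (-f1 * t) / (ρ1 * Real.exp (-f1 * t) + ρ2) +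
        ρ2 / (ρ1 * Real.exp (-f1 * t) + ρ2) = 1)) :=
  stmt_9_general f1 ρ1 hρ1 ρ2 hρ2 yC
end

section
/- Assume $\sup_i f_i < \infty$ and that $u_i, v$ satisfy the continuity equations, the incompressibility constraint, the velocity formula $v(y,t)=\sum_j f_j \int_y^1 u_j(z,t)dz$, and the mass conservation $\int_0^1 u_i(z,t)\,dz = \rho_i$ for all $t\ge 0$. Then the boundary condition $u_i(0,t) = f_i\rho_i / \sum_j f_j \rho_j$ holds for all $t \ge 0$ and each $i$. -/
/-!
Integrating the continuity equation for species `k` over `(0,1)`, the left side vanishes by mass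
conservation and the flux term integrates to `-v(0,t) uₖ(0,t)`, so `v(0,t) uₖ(0,t) = fₖ ρₖ`
(only `≤` when the flux derivative is not integrable, where the Bochner integral is `0`).
The velocity formula gives `v(0,t) = ∑ⱼ fⱼ ρⱼ`, and incompressibility gives
`∑ₖ v(0,t) uₖ(0,t) = v(0,t)`; the termwise inequalities between two series with equal sums
are therefore equalities.
-/

open MeasureTheory Set

theorem HasDerivAt.eq_zero_of_forall_Ici_eq {E : Type*} [NormedAddCommGroup E] [NormedSpace ℝ E]
    {F : ℝ → E} {F' c : E} {t : ℝ} (hF : HasDerivAt F F' t) (hc : ∀ τ ∈ Ici t, F τ = c) :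
    F' = 0 :=
  (uniqueDiffWithinAt_Ici t).eq_deriv _ hF.hasDerivWithinAt
    ((hasDerivWithinAt_const t _ c).congr_of_mem hc self_mem_Ici)

theorem le_of_integral_balance {s : Set ℝ} {a b u : ℝ → ℝ} {c ρ B : ℝ} (hs : MeasurableSet s)
    (hu : IntegrableOn u s) (hbal : ∀ y ∈ s, a y + b y = -(c * u y))
    (ha : ∫ y in s, a y = 0) (hb : ∫ y in s, b y = -B) (huρ : ∫ y in s, u y = ρ)
    (hcρ : 0 ≤ c * ρ) : B ≤ c * ρ := by
  by_cases hbi : IntegrableOn b s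
  · have hcu : IntegrableOn (fun y => -(c * u y)) s := (hu.const_mul c).neg
    have ha' : ∫ y in s, a y = ∫ y in s, (-(c * u y) - b y) :=
      setIntegral_congr_fun hs fun y hy => eq_sub_of_add_eq (hbal y hy)
    rw [integral_sub hcu hbi, integral_neg, integral_const_mul, huρ, hb, ha] at ha'
    linarith
  · rw [integral_undef hbi] at hb
    linarith

theorem eq_of_forall_le_of_tsum_eq {x y : ℕ → ℝ} (hx : ∀ k, 0 ≤ x k) (hxy : ∀ k, x k ≤ y k)
    (hy : Summable y) (hsum : ∑' k, x k = ∑' k, y k) (k : ℕ) : x k = y k :=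
  (hxy k).eq_or_lt.resolve_right fun hlt =>
    (Summable.tsum_lt_tsum_of_nonneg hx hxy hlt hy).ne hsum

/-- If `sup fᵢ < ∞` and `uᵢ, v` satisfy the continuity equations, the incompressibility
constraint, the velocity formula and mass conservation, then the boundary condition
`uᵢ(0,t) = fᵢρᵢ / ∑ⱼ fⱼρⱼ` holds. -/
theorem stmt_11 (f ρ : ℕ → ℝ) (hf : ∀ i, 0 < f i) (hfb : ∃ M, ∀ i, f i ≤ M)
    (hρ : ∀ i, 0 < ρ i) (hρ1 : ∑' i, ρ i = 1)
    (u : ℕ → ℝ → ℝ → ℝ) (v : ℝ → ℝ → ℝ)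
    (hnn : ∀ i, ∀ y ∈ Set.Ico (0:ℝ) 1, ∀ t ∈ Set.Ici (0:ℝ), 0 ≤ u i y t)
    (hcont : ∀ i, ∀ y ∈ Set.Ico (0:ℝ) 1, ∀ t ∈ Set.Ici (0:ℝ),
      deriv (fun τ => u i y τ) t + deriv (fun z => v z t * u i z t) y = -(f i * u i y t))
    (hone : ∀ y ∈ Set.Ico (0:ℝ) 1, ∀ t ∈ Set.Ici (0:ℝ), ∑' j, u j y t = 1)
    (hvel : ∀ y ∈ Set.Ico (0:ℝ) 1, ∀ t ∈ Set.Ici (0:ℝ),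
      v y t = ∑' j, f j * ∫ z in Set.Ioo y 1, u j z t)
    (hmass : ∀ i, ∀ t ∈ Set.Ici (0:ℝ), ∫ z in Set.Ioo (0:ℝ) 1, u i z t = ρ i)
    -- integration by parts (using `v(1,t) = 0`) assumed valid:
    (hibp : ∀ i, ∀ t ∈ Set.Ici (0:ℝ),
      ∫ y in Set.Ioo (0:ℝ) 1, deriv (fun z => v z t * u i z t) y = -(v 0 t * u i 0 t))
    -- interchange of time differentiation and integration assumed valid:
    (hdt : ∀ i, ∀ t ∈ Set.Ici (0:ℝ),
      HasDerivAt (fun τ => ∫ y in Set.Ioo (0:ℝ) 1, u i y τ)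
        (∫ y in Set.Ioo (0:ℝ) 1, deriv (fun τ => u i y τ) t) t) :
    ∀ i, ∀ t ∈ Set.Ici (0:ℝ), u i 0 t = f i * ρ i / ∑' j, f j * ρ j := by
  intro i t ht
  obtain ⟨M, hM⟩ := hfb
  have h0 : (0:ℝ) ∈ Ico (0:ℝ) 1 := ⟨le_rfl, one_pos⟩
  have hρs : Summable ρ := by
    by_contra h
    simp [tsum_eq_zero_of_not_summable h] at hρ1
  have hfρ0 : ∀ j, 0 ≤ f j * ρ j := fun j => (mul_pos (hf j) (hρ j)).le
  have hfρ : Summable fun j => f j * ρ j :=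
    .of_nonneg_of_le hfρ0 (fun j => mul_le_mul_of_nonneg_right (hM j) (hρ j).le)
      (hρs.mul_left M)
  have hv0 : v 0 t = ∑' j, f j * ρ j := by
    rw [hvel 0 h0 t ht]
    exact tsum_congr fun j => by rw [hmass j t ht]
  have hflux : ∀ k, v 0 t * u k 0 t ≤ f k * ρ k := fun k =>
    le_of_integral_balance measurableSet_Ioo
      (Integrable.of_integral_ne_zero ((hmass k t ht).symm ▸ (hρ k).ne'))
      (fun y hy => hcont k y (Ioo_subset_Ico_self hy) t ht)
      ((hdt k t ht).eq_zero_of_forall_Ici_eq fun τ hτ => hmass k τ (Ici_subset_Ici.2 ht hτ))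
      (hibp k t ht) (hmass k t ht) (hfρ0 k)
  have htotal : ∑' k, v 0 t * u k 0 t = ∑' k, f k * ρ k := by
    rw [tsum_mul_left, hone 0 h0 t ht, mul_one, hv0]
  have hpos : 0 < ∑' j, f j * ρ j := hfρ.tsum_pos hfρ0 0 (mul_pos (hf 0) (hρ 0))
  have hv0pos : 0 < v 0 t := hv0 ▸ hpos
  rw [eq_div_iff hpos.ne', ← hv0, mul_comm,
    eq_of_forall_le_of_tsum_eq (fun k => mul_nonneg hv0pos.le (hnn k 0 h0 t ht)) hflux hfρ
      htotal i]
end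

section
/- Define $y_C(t) = 1 - e^{-at} + (at)^b \Gamma(1-b, at)$ for $a > 0$ and $b \in (0,1)$. Then as $t \to 0^+$, $y_C(t) = \Gamma(1-b)\, a^b\, t^b + O(t)$; in particular $\lim_{t\to 0^+} y_C(t)/t^b = a^b\,\Gamma(1-b)$. -/
/-!
Splitting `Γ(1-b) = γ(1-b, x) + Γ(1-b, x)` at `x = at` turns `y_C(t) - Γ(1-b) (at)^b` into
`(1 - e^{-x}) - x^b γ(1-b, x)`. Both terms lie between `0` and a multiple of `x`: the first since
`1 - x ≤ e^{-x} ≤ 1`, the second since `e^{-w} ≤ 1` gives `γ(1-b, x) ≤ x^{1-b}/(1-b)`. Dividing the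
resulting `O(t)` error by `t^b` leaves `O(t^{1-b}) → 0`.
-/

open MeasureTheory Set Real Filter Asymptotics Topology

/-- The upper incomplete gamma function `Γ(z,p) = ∫_p^∞ e^{-w} w^{z-1} dw`. -/
noncomputable def igamma (z p : ℝ) : ℝ := ∫ w in Set.Ioi p, Real.exp (-w) * w ^ (z - 1)

noncomputable def lowerIGamma (s x : ℝ) : ℝ := ∫ w in Ioc 0 x, exp (-w) * w ^ (s - 1)

lemma lowerIGamma_add_igamma {s x : ℝ} (hs : 0 < s) (hx : 0 ≤ x) :
    lowerIGamma s x + igamma s x = Gamma s := by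
  rw [Gamma_eq_integral hs, lowerIGamma, igamma,
    ← setIntegral_union (Ioc_disjoint_Ioi le_rfl) measurableSet_Ioi
      ((GammaIntegral_convergent hs).mono_set Ioc_subset_Ioi_self)
      ((GammaIntegral_convergent hs).mono_set (Ioi_subset_Ioi hx)),
    Ioc_union_Ioi_eq_Ioi hx]

lemma lowerIGamma_nonneg (s x : ℝ) : 0 ≤ lowerIGamma s x :=
  setIntegral_nonneg measurableSet_Ioc fun _ hw =>
    mul_nonneg (exp_pos _).le (rpow_nonneg hw.1.le _)

lemma lowerIGamma_le_rpow_div {s x : ℝ} (hs : 0 < s) (hx : 0 ≤ x) :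
    lowerIGamma s x ≤ x ^ s / s := by
  have hpow_int : ∫ w in Ioc 0 x, w ^ (s - 1) = x ^ s / s := by
    rw [← intervalIntegral.integral_of_le hx, integral_rpow (Or.inl (by linarith)),
      sub_add_cancel, zero_rpow hs.ne']
    ring
  rw [lowerIGamma, ← hpow_int]
  refine setIntegral_mono_on ((GammaIntegral_convergent hs).mono_set Ioc_subset_Ioi_self)
    ((intervalIntegrable_iff_integrableOn_Ioc_of_le hx).mp
      (intervalIntegral.intervalIntegrable_rpow' (by linarith)))
    measurableSet_Ioc fun w hw => ?_
  exact mul_le_of_le_one_left (rpow_nonneg hw.1.le _) (exp_le_one_iff.mpr (by linarith [hw.1]))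

lemma abs_sub_Gamma_mul_rpow_le {b x : ℝ} (hb : b < 1) (hx : 0 < x) :
    |1 - exp (-x) + x ^ b * igamma (1 - b) x - Gamma (1 - b) * x ^ b| ≤ x + x / (1 - b) := by
  have hs : 0 < 1 - b := by linarith
  have hdecomp : 1 - exp (-x) + x ^ b * igamma (1 - b) x - Gamma (1 - b) * x ^ b =
      (1 - exp (-x)) - x ^ b * lowerIGamma (1 - b) x := by
    rw [← lowerIGamma_add_igamma hs hx.le]
    ring
  have hexp_le : 1 - exp (-x) ≤ x := by linarith [add_one_le_exp (-x)]
  have hexp_nonneg : 0 ≤ 1 - exp (-x) := by linarith [exp_le_one_iff.mpr (neg_nonpos.mpr hx.le)]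
  have hlower_nonneg : 0 ≤ x ^ b * lowerIGamma (1 - b) x :=
    mul_nonneg (rpow_nonneg hx.le _) (lowerIGamma_nonneg _ _)
  have hlower_le : x ^ b * lowerIGamma (1 - b) x ≤ x / (1 - b) :=
    calc x ^ b * lowerIGamma (1 - b) x ≤ x ^ b * (x ^ (1 - b) / (1 - b)) :=
          mul_le_mul_of_nonneg_left (lowerIGamma_le_rpow_div hs hx.le) (rpow_nonneg hx.le _)
      _ = x / (1 - b) := by rw [mul_div_assoc', ← rpow_add hx, add_sub_cancel, rpow_one]
  rw [hdecomp, abs_le]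
  constructor <;> linarith

lemma tendsto_div_rpow_of_isBigO {f : ℝ → ℝ} {b c : ℝ} (hb : b < 1)
    (h : (fun t => f t - c * t ^ b) =O[𝓝[>] 0] fun t => t) :
    Tendsto (fun t => f t / t ^ b) (𝓝[>] 0) (𝓝 c) := by
  have hrem : (fun t => (f t - c * t ^ b) / t ^ b) =O[𝓝[>] 0] fun t => t ^ (1 - b) := by
    refine (h.mul (isBigO_refl (fun t => (t ^ b)⁻¹) _)).congr'
      (Eventually.of_forall fun t => (div_eq_mul_inv _ _).symm) ?_
    filter_upwards [self_mem_nhdsWithin] with t (ht : 0 < t)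
    rw [rpow_sub ht, rpow_one, div_eq_mul_inv]
  have hpow : Tendsto (fun t : ℝ => t ^ (1 - b)) (𝓝[>] 0) (𝓝 0) := by
    have := (continuousAt_rpow_const 0 (1 - b) (Or.inr (by linarith))).tendsto
    rw [zero_rpow (by linarith)] at this
    exact this.mono_left nhdsWithin_le_nhds
  refine ((hrem.trans_tendsto hpow).add_const c).congr' ?_ |>.trans (by rw [zero_add])
  filter_upwards [self_mem_nhdsWithin] with t (ht : 0 < t)
  field_simp [(rpow_pos_of_pos ht b).ne']
  ring

/-- For `y_C(t) = 1 - e^{-at} + (at)^b Γ(1-b, at)` with `b ∈ (0,1)`: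
`y_C(t) = Γ(1-b) a^b t^b + O(t)` as `t → 0⁺`, and `y_C(t)/t^b → a^b Γ(1-b)`. -/
theorem stmt_16 (a b : ℝ) (ha : 0 < a) (hb : b ∈ Set.Ioo (0:ℝ) 1)
    (yC : ℝ → ℝ)
    (hyC : ∀ t, yC t = 1 - Real.exp (-(a * t)) + (a * t) ^ b * igamma (1 - b) (a * t)) :
    (fun t => yC t - Real.Gamma (1 - b) * a ^ b * t ^ b)
      =O[nhdsWithin 0 (Set.Ioi 0)] (fun t => t) ∧
    Filter.Tendsto (fun t => yC t / t ^ b) (nhdsWithin 0 (Set.Ioi 0))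
      (nhds (a ^ b * Real.Gamma (1 - b))) := by
  have hO : (fun t => yC t - Gamma (1 - b) * a ^ b * t ^ b) =O[𝓝[>] 0] fun t => t := by
    refine IsBigO.of_bound (a + a / (1 - b)) ?_
    filter_upwards [self_mem_nhdsWithin] with t (ht : 0 < t)
    rw [norm_eq_abs, norm_eq_abs, abs_of_pos ht, hyC, mul_assoc, ← mul_rpow ha.le ht.le]
    calc _ ≤ a * t + a * t / (1 - b) := abs_sub_Gamma_mul_rpow_le hb.2 (mul_pos ha ht)
      _ = (a + a / (1 - b)) * t := by ring
  refine ⟨hO, ?_⟩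
  rw [mul_comm]
  exact tendsto_div_rpow_of_isBigO hb.2 hO
end
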